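/- arXiv:0709.1463 — 4 statements merged into one kernel-verified Lean document; each statement's English description precedes it below -/
import Mathlib

section
/- Let G be a Lie group and L_d : G × G → ℝ a smooth function invariant under the diagonal left action of G. Define l_d(W) = L_d(e, W). Then for all g₀, g₁ ∈ G with W = g₀⁻¹g₁, the pre-momentum p⁻ = −D₁L_d(g₀,g₁) ∈ T*_{g₀}G and post-momentum p⁺ = D₂L_d(g₀,g₁) ∈ T*_{g₁}G are related by p⁺ = R*_{W⁻¹} p⁻, where R*_{W⁻¹} is the pullback along right multiplication by W⁻¹. -/
/-!
By left invariance, `g ↦ L_d(g W⁻¹, g)` is constant (equal to `L_d(e, W)`). Differentiating it at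
`g₁`, where `g₁ W⁻¹ = g₀`, the total derivative splits into the partial derivatives:
`D₁L_d(g₀, g₁) ∘ d(R_{W⁻¹}) + D₂L_d(g₀, g₁) = 0`.
-/

open Manifold

section TotalDerivative

variable {𝕜 : Type*} [NontriviallyNormedField 𝕜]
  {E : Type*} [NormedAddCommGroup E] [NormedSpace 𝕜 E] {H : Type*} [TopologicalSpace H]
  {I : ModelWithCorners 𝕜 E H} {M : Type*} [TopologicalSpace M] [ChartedSpace H M]
  {E' : Type*} [NormedAddCommGroup E'] [NormedSpace 𝕜 E'] {H' : Type*} [TopologicalSpace H']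
  {I' : ModelWithCorners 𝕜 E' H'} {M' : Type*} [TopologicalSpace M'] [ChartedSpace H' M']
  {E'' : Type*} [NormedAddCommGroup E''] [NormedSpace 𝕜 E''] {H'' : Type*}
  [TopologicalSpace H''] {I'' : ModelWithCorners 𝕜 E'' H''} {M'' : Type*}
  [TopologicalSpace M''] [ChartedSpace H'' M'']
  {F : Type*} [NormedAddCommGroup F] [NormedSpace 𝕜 F] {HN : Type*} [TopologicalSpace HN]
  {J : ModelWithCorners 𝕜 F HN} {N : Type*} [TopologicalSpace N] [ChartedSpace HN N]

theorem mfderiv_comp₂_apply {Φ : M → M' → M''} {f : N → M} {g : N → M'} {x : N}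
    (hΦ : MDifferentiableAt (I.prod I') I'' (Function.uncurry Φ) (f x, g x))
    (hf : MDifferentiableAt J I f x) (hg : MDifferentiableAt J I' g x) (v : TangentSpace J x) :
    mfderiv J I'' (fun y => Φ (f y) (g y)) x v
      = mfderiv I I'' (fun z => Φ z (g x)) (f x) (mfderiv J I f x v)
        + mfderiv I' I'' (Φ (f x)) (g x) (mfderiv J I' g x v) := by
  refine (mfderiv_comp_apply x hΦ (hf.prodMk hg) v).trans ?_
  rw [hf.mfderiv_prod hg]
  exact mfderiv_prod_eq_add_apply hΦ

end TotalDerivative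

theorem mfderiv_right_eq_neg_mfderiv_left_mul_right
    {E : Type*} [NormedAddCommGroup E] [NormedSpace ℝ E]
    {H : Type*} [TopologicalSpace H] {I : ModelWithCorners ℝ E H}
    {G : Type*} [TopologicalSpace G] [ChartedSpace H G] [Group G] [ContMDiffMul I 1 G]
    {Ld : G → G → ℝ} (hinv : ∀ g h k : G, Ld (g * h) (g * k) = Ld h k) {a x : G}
    (hLd : MDifferentiableAt (I.prod I) 𝓘(ℝ, ℝ) (fun p : G × G => Ld p.1 p.2) (x * a, x))
    (v : TangentSpace I x) :
    mfderiv I 𝓘(ℝ, ℝ) (fun g => Ld (x * a) g) x v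
      = -(mfderiv I 𝓘(ℝ, ℝ) (fun g => Ld g x) (x * a) (mfderiv I I (· * a) x v)) := by
  have hconst : (fun g => Ld (g * a) g) = fun _ => Ld 1 a⁻¹ :=
    funext fun g => by simpa using hinv (g * a) 1 a⁻¹
  have hsum := mfderiv_comp₂_apply (Φ := Ld) (f := (· * a)) (g := id)
    hLd mdifferentiableAt_mul_right mdifferentiableAt_id v
  simp only [id_eq] at hsum
  rw [hconst, mfderiv_const, mfderiv_id] at hsum
  exact eq_neg_of_add_eq_zero_right hsum.symm

/-- Let `G` be a Lie group and `L_d : G × G → ℝ` smooth and invariant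
under the diagonal left action.  Then for `W = g₀⁻¹ g₁`, the pre-momentum
`p⁻ = -D₁L_d(g₀,g₁) ∈ T*_{g₀}G` and post-momentum `p⁺ = D₂L_d(g₀,g₁) ∈ T*_{g₁}G`
are related by `p⁺ = R*_{W⁻¹} p⁻`, i.e. for every tangent vector `v ∈ T_{g₁}G`,
`p⁺(v) = p⁻(d(R_{W⁻¹})_{g₁} v)` where `R_{W⁻¹}` is right multiplication by `W⁻¹`. -/
theorem post_momentum_is_right_translate_of_pre_momentum
    {E : Type*} [NormedAddCommGroup E] [NormedSpace ℝ E]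
    {H : Type*} [TopologicalSpace H] (I : ModelWithCorners ℝ E H)
    {G : Type*} [TopologicalSpace G] [ChartedSpace H G] [Group G] [LieGroup I (⊤ : ℕ∞) G]
    (Ld : G → G → ℝ)
    (hLd : ContMDiff (I.prod I) 𝓘(ℝ, ℝ) (⊤ : ℕ∞) (fun p : G × G => Ld p.1 p.2))
    (hinv : ∀ g h k : G, Ld (g * h) (g * k) = Ld h k)
    (g₀ g₁ : G) (v : TangentSpace I g₁) :
    mfderiv I 𝓘(ℝ, ℝ) (fun g => Ld g₀ g) g₁ v
      = -(mfderiv I 𝓘(ℝ, ℝ) (fun g => Ld g g₁) g₀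
            (mfderiv I I (fun g => g * (g₀⁻¹ * g₁)⁻¹) g₁ v)) := by
  have hg₀ : g₁ * (g₀⁻¹ * g₁)⁻¹ = g₀ := by group
  have h := mfderiv_right_eq_neg_mfderiv_left_mul_right hinv
    (hLd.mdifferentiable (by simp) (g₁ * (g₀⁻¹ * g₁)⁻¹, g₁)) v
  rwa [hg₀] at h
end

section
/- For the nonholonomic particle discretization, the three discrete nonholonomic equations are equivalent to the reflection equation p⁻₁ = (P₁ − Q₁) p⁻₀, where p⁻₀ = (x₁−x₀, y₁−y₀, z₁−z₀), p⁻₁ = (x₂−x₁, y₂−y₁, z₂−z₁), and P₁, Q₁ are the Euclidean orthogonal projections onto D₁ = {(u,v,w) : w = y₁u} and its orthogonal complement span{(−y₁, 0, 1)} respectively. -/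
/-!
The second difference `p⁻₁ - p⁻₀` is the discrete force; the first two equations say it is
normal to `D₁`, i.e. a multiple of `n = (-y₁, 0, 1)`, and the third says that
`p⁻₀ + p⁻₁ = (x₂ - x₀, y₂ - y₀, z₂ - z₀)` lies in `D₁`, i.e. is orthogonal to `n`.
These two conditions together characterise the reflection of `p⁻₀` in the hyperplane `n⊥`.
-/

open Matrix

theorem eq_reflection_iff {m K : Type*} [Fintype m] [Field K] (p q n : m → K)
    (hn : n ⬝ᵥ n ≠ 0) :
    q = p - (2 * (p ⬝ᵥ n) / (n ⬝ᵥ n)) • n ↔ (∃ c : K, q - p = c • n) ∧ (p + q) ⬝ᵥ n = 0 := by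
  constructor
  · rintro rfl
    refine ⟨⟨-(2 * (p ⬝ᵥ n) / (n ⬝ᵥ n)), by rw [neg_smul]; abel⟩, ?_⟩
    rw [add_dotProduct, sub_dotProduct, smul_dotProduct, smul_eq_mul]
    field_simp
    ring
  · rintro ⟨⟨c, hc⟩, horth⟩
    obtain rfl : q = p + c • n := by rw [← hc]; abel
    have hc : c = -(2 * (p ⬝ᵥ n) / (n ⬝ᵥ n)) := by
      rw [add_dotProduct, add_dotProduct, smul_dotProduct, smul_eq_mul] at horth
      field_simp
      linear_combination horth
    rw [hc, neg_smul, sub_eq_add_neg]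

theorem exists_eq_smul_normal_iff {R : Type*} [CommRing R] (y : R) (v : Fin 3 → R) :
    (∃ c : R, v = c • ![-y, 0, 1]) ↔ v 0 + y * v 2 = 0 ∧ v 1 = 0 := by
  constructor
  · rintro ⟨c, rfl⟩
    simp [mul_comm]
  · rintro ⟨h0, h1⟩
    refine ⟨v 2, funext fun i => ?_⟩
    fin_cases i
    · simp only [Fin.zero_eta, Fin.isValue, cons_val_zero, Pi.smul_apply, smul_eq_mul]
      linear_combination h0
    · simpa using h1
    · simp

theorem normal_dotProduct_self_ne_zero (y : ℝ) : ![-y, 0, 1] ⬝ᵥ ![-y, 0, 1] ≠ 0 := by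
  simp only [dotProduct, Fin.sum_univ_three, cons_val_zero, cons_val_one, cons_val_two,
    Nat.succ_eq_add_one, Nat.reduceAdd, tail_cons, head_cons]
  nlinarith [sq_nonneg y]

/-- For the nonholonomic particle in `ℝ³` (constraint distribution
`D₁ = {(u,v,w) : w = y₁ u}`, with Euclidean orthogonal complement spanned by
`n = (-y₁, 0, 1)`), the three discrete nonholonomic equations are equivalent to
the reflection equation `p⁻₁ = (P₁ - Q₁) p⁻₀ = p⁻₀ - 2 (⟨p⁻₀,n⟩/⟨n,n⟩) n`,
where `p⁻₀ = (x₁-x₀, y₁-y₀, z₁-z₀)` and `p⁻₁ = (x₂-x₁, y₂-y₁, z₂-z₁)`. -/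
theorem nonholonomic_particle_equations_iff_reflection
    (x₀ y₀ z₀ x₁ y₁ z₁ x₂ y₂ z₂ : ℝ) :
    ((x₂ - 2*x₁ + x₀) + y₁ * (z₂ - 2*z₁ + z₀) = 0 ∧
     y₂ - 2*y₁ + y₀ = 0 ∧
     (z₂ - z₀) - y₁ * (x₂ - x₀) = 0)
    ↔ (![x₂ - x₁, y₂ - y₁, z₂ - z₁] : Fin 3 → ℝ)
        = ![x₁ - x₀, y₁ - y₀, z₁ - z₀]
          - ((2 * ((![x₁ - x₀, y₁ - y₀, z₁ - z₀] : Fin 3 → ℝ) ⬝ᵥ ![-y₁, 0, 1]))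
              / ((![-y₁, 0, 1] : Fin 3 → ℝ) ⬝ᵥ ![-y₁, 0, 1])) • ![-y₁, 0, 1] := by
  rw [eq_reflection_iff _ _ _ (normal_dotProduct_self_ne_zero y₁), exists_eq_smul_normal_iff]
  simp only [dotProduct, Fin.sum_univ_three, Pi.add_apply, Pi.sub_apply, cons_val_zero,
    cons_val_one, cons_val_two, Nat.succ_eq_add_one, Nat.reduceAdd, tail_cons, head_cons]
  constructor
  · rintro ⟨h₁, h₂, h₃⟩
    exact ⟨⟨by linear_combination h₁, by linear_combination h₂⟩, by linear_combination h₃⟩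
  · rintro ⟨⟨h₁, h₂⟩, h₃⟩
    exact ⟨by linear_combination h₁, by linear_combination h₂, by linear_combination h₃⟩
end

section
/- Let M ∈ ℝ^{n×n} be symmetric positive definite, μ(q) an m×n matrix for each q, and define at each point the M⁻¹-orthogonal projectors as in the geometric nonholonomic integrator. For the discrete Lagrangian L_d(q₀,q₁) = (1/2h)(q₁−q₀)ᵀM(q₁−q₀) − (h/2)(V(q₀)+V(q₁)), the discrete nonholonomic equations (projected equation with multiplier and the average-constraint equation) are equivalent to the system: q_{k+1} − 2q_k + q_{k−1} = −h² M⁻¹(∇V(q_k) + μ(q_k)ᵀ λ̃_k) for some λ̃_k ∈ ℝᵐ, together with μ(q_k) (q_{k+1} − q_{k−1})/(2h) = 0. -/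
/-!
The post- and pre-momenta at `q_k` differ by `-(1/h) M (q_{k+1} - 2 q_k + q_{k-1}) - h ∇V(q_k)`
and add up to `(1/h) M (q_{k+1} - q_{k-1})`. Inverting `M` in the first identity and rescaling
the multiplier by `1/h` gives the Verlet form of the multiplier equation; in the second, `M⁻¹`
cancels `M`, so the averaged constraint is exactly the centred-difference constraint.
-/

open Matrix

theorem exists_smul_mulVec_iff {𝕜 ι κ : Type*} [Field 𝕜] [Fintype κ] {c : 𝕜} (hc : c ≠ 0)
    (A : Matrix ι κ 𝕜) (P : (ι → 𝕜) → Prop) : (∃ l, P (c • A *ᵥ l)) ↔ ∃ l, P (A *ᵥ l) :=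
  ⟨fun ⟨l, hl⟩ => ⟨c • l, by rwa [mulVec_smul]⟩,
    fun ⟨l, hl⟩ => ⟨c⁻¹ • l, by rwa [mulVec_smul, smul_smul, mul_inv_cancel₀ hc, one_smul]⟩⟩

section Momenta

variable {𝕜 ι : Type*} [Field 𝕜] [Fintype ι]

/-- `-D₁L_d(q₀, q₁)` for `L_d(q₀,q₁) = (1/2h)(q₁-q₀)ᵀM(q₁-q₀) - (h/2)(V(q₀)+V(q₁))`,
with `gradV = ∇V`. -/
def preMomentum (M : Matrix ι ι 𝕜) (gradV : (ι → 𝕜) → ι → 𝕜) (h : 𝕜) (q₀ q₁ : ι → 𝕜) :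
    ι → 𝕜 :=
  (1/h) • M *ᵥ (q₁ - q₀) + (h/2) • gradV q₀

/-- `D₂L_d(q₀, q₁)` for the same discrete Lagrangian. -/
def postMomentum (M : Matrix ι ι 𝕜) (gradV : (ι → 𝕜) → ι → 𝕜) (h : 𝕜) (q₀ q₁ : ι → 𝕜) :
    ι → 𝕜 :=
  (1/h) • M *ᵥ (q₁ - q₀) - (h/2) • gradV q₁

variable (M : Matrix ι ι 𝕜) (gradV : (ι → 𝕜) → ι → 𝕜) (h : 𝕜) (qprev qk qnext : ι → 𝕜)

theorem preMomentum_add_postMomentum :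
    preMomentum M gradV h qk qnext + postMomentum M gradV h qprev qk
      = (1/h) • M *ᵥ (qnext - qprev) := by
  simp only [preMomentum, postMomentum, mulVec_sub]
  module

theorem postMomentum_sub_preMomentum [CharZero 𝕜] :
    postMomentum M gradV h qprev qk - preMomentum M gradV h qk qnext
      = -(1/h) • M *ᵥ (qnext - (2 : 𝕜) • qk + qprev) - h • gradV qk := by
  simp only [preMomentum, postMomentum, mulVec_sub, mulVec_add, mulVec_smul]
  module

end Momenta

section Invertible

variable {𝕜 ι : Type*} [Field 𝕜] [Fintype ι] [DecidableEq ι] {M : Matrix ι ι 𝕜}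

theorem Matrix.eq_nonsing_inv_mulVec_iff (hM : IsUnit M) {v w : ι → 𝕜} :
    v = M⁻¹ *ᵥ w ↔ M *ᵥ v = w := by
  have hdet := (isUnit_iff_isUnit_det M).mp hM
  constructor
  · rintro rfl
    rw [mulVec_mulVec, mul_nonsing_inv M hdet, one_mulVec]
  · rintro rfl
    rw [mulVec_mulVec, nonsing_inv_mul M hdet, one_mulVec]

theorem neg_smul_mulVec_sub_smul_eq_iff (hM : IsUnit M) {h : 𝕜} (hh : h ≠ 0) (d g y : ι → 𝕜) :
    -(1/h) • M *ᵥ d - h • g = y ↔ d = -(h^2) • M⁻¹ *ᵥ (g + (1/h) • y) := by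
  rw [← mulVec_smul M⁻¹, M.eq_nonsing_inv_mulVec_iff hM]
  constructor
  · rintro rfl
    match_scalars <;> field_simp
    ring
  · intro hd
    rw [hd]
    match_scalars <;> field_simp
    ring

theorem nonsing_inv_mulVec_half_smul (hM : IsUnit M) (h : 𝕜) (v : ι → 𝕜) :
    M⁻¹ *ᵥ ((1/2 : 𝕜) • (1/h) • M *ᵥ v) = (1/(2*h)) • v := by
  rw [eq_comm, M.eq_nonsing_inv_mulVec_iff hM, mulVec_smul, smul_smul, one_div_mul_one_div]

end Invertible

theorem discrete_nonholonomic_equations_iff_verlet_form_general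
    {n m : ℕ} (M : Matrix (Fin n) (Fin n) ℝ) (hM : M.PosDef)
    (μ : (Fin n → ℝ) → Matrix (Fin m) (Fin n) ℝ)
    (gradV : (Fin n → ℝ) → (Fin n → ℝ))
    (h : ℝ) (hh : 0 < h)
    (qprev qk qnext : Fin n → ℝ) :
    ((∃ l : Fin m → ℝ,
        ((1/h) • M.mulVec (qk - qprev) - (h/2) • gradV qk)
          - ((1/h) • M.mulVec (qnext - qk) + (h/2) • gradV qk)
        = (μ qk).transpose.mulVec l) ∧
      (μ qk).mulVec (M⁻¹.mulVec ((1/2 : ℝ) •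
        (((1/h) • M.mulVec (qnext - qk) + (h/2) • gradV qk)
          + ((1/h) • M.mulVec (qk - qprev) - (h/2) • gradV qk)))) = 0)
    ↔ ((∃ l : Fin m → ℝ,
          qnext - (2 : ℝ) • qk + qprev
            = -(h^2) • M⁻¹.mulVec (gradV qk + (μ qk).transpose.mulVec l)) ∧
        (μ qk).mulVec ((1/(2*h)) • (qnext - qprev)) = 0) := by
  show (∃ l, postMomentum M gradV h qprev qk - preMomentum M gradV h qk qnext = (μ qk)ᵀ *ᵥ l) ∧
      μ qk *ᵥ (M⁻¹ *ᵥ ((1/2 : ℝ) • (preMomentum M gradV h qk qnext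
        + postMomentum M gradV h qprev qk))) = 0 ↔ _
  rw [postMomentum_sub_preMomentum, preMomentum_add_postMomentum,
    nonsing_inv_mulVec_half_smul hM.isUnit]
  simp only [neg_smul_mulVec_sub_smul_eq_iff hM.isUnit hh.ne']
  rw [exists_smul_mulVec_iff (one_div_ne_zero hh.ne') _
    fun y => qnext - (2 : ℝ) • qk + qprev = -(h^2) • M⁻¹ *ᵥ (gradV qk + y)]

/-- For the symmetric discretization
`L_d(q₀,q₁) = (1/2h)(q₁-q₀)ᵀM(q₁-q₀) - (h/2)(V(q₀)+V(q₁))` of a mechanical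
Lagrangian with constraints `μ(q) q̇ = 0`, the discrete nonholonomic equations
(the pre-momentum is `p⁻ = -D₁L_d(q_k,q_{k+1}) = M(q_{k+1}-q_k)/h + (h/2)∇V(q_k)`
and the post-momentum is `p⁺ = D₂L_d(q_{k-1},q_k) = M(q_k-q_{k-1})/h - (h/2)∇V(q_k)`;
the equations are `D₁L_d(q_k,q_{k+1}) + D₂L_d(q_{k-1},q_k) = μ(q_k)ᵀ λ_k` together
with `μ(q_k) M⁻¹ (p⁻ + p⁺)/2 = 0`) are equivalent to the system
`q_{k+1} - 2q_k + q_{k-1} = -h² M⁻¹(∇V(q_k) + μ(q_k)ᵀ λ̃_k)` for some `λ̃_k`,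
together with `μ(q_k) (q_{k+1} - q_{k-1})/(2h) = 0`. -/
theorem discrete_nonholonomic_equations_iff_verlet_form
    {n m : ℕ} (M : Matrix (Fin n) (Fin n) ℝ) (hM : M.PosDef)
    (μ : (Fin n → ℝ) → Matrix (Fin m) (Fin n) ℝ)
    (V : (Fin n → ℝ) → ℝ) (gradV : (Fin n → ℝ) → (Fin n → ℝ))
    (hV : Differentiable ℝ V)
    (hgrad : ∀ q u : Fin n → ℝ, fderiv ℝ V q u = gradV q ⬝ᵥ u)
    (h : ℝ) (hh : 0 < h)
    (qprev qk qnext : Fin n → ℝ) :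
    ((∃ l : Fin m → ℝ,
        ((1/h) • M.mulVec (qk - qprev) - (h/2) • gradV qk)
          - ((1/h) • M.mulVec (qnext - qk) + (h/2) • gradV qk)
        = (μ qk).transpose.mulVec l) ∧
      (μ qk).mulVec (M⁻¹.mulVec ((1/2 : ℝ) •
        (((1/h) • M.mulVec (qnext - qk) + (h/2) • gradV qk)
          + ((1/h) • M.mulVec (qk - qprev) - (h/2) • gradV qk)))) = 0)
    ↔ ((∃ l : Fin m → ℝ,
          qnext - (2 : ℝ) • qk + qprev
            = -(h^2) • M⁻¹.mulVec (gradV qk + (μ qk).transpose.mulVec l)) ∧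
        (μ qk).mulVec ((1/(2*h)) • (qnext - qprev)) = 0) :=
  discrete_nonholonomic_equations_iff_verlet_form_general M hM μ gradV h hh qprev qk qnext
end

section
/- Let G be a Lie group acting on a manifold Q, L_d : Q × Q → ℝ invariant under the diagonal action, and suppose ξ ∈ 𝔤 is a horizontal symmetry (ξ_Q(q) ∈ D_q for all q, where D is the constraint distribution). If a sequence (q_k) satisfies the discrete nonholonomic equations (P − Q)*(D₁L_d(q_k, q_{k+1})) + D₂L_d(q_{k−1}, q_k) = 0, then the momentum component J_ξ(q_{k−1}, q_k) = ⟨D₂L_d(q_{k−1}, q_k), ξ_Q(q_k)⟩ is constant in k. -/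
/-!
Differentiating the invariance `L_d(c(s)·q₀, c(s)·q₁) = L_d(q₀, q₁)` at `s = 0` gives
`D₁L_d(q_k, q_{k+1})·ξ_Q(q_k) = -D₂L_d(q_k, q_{k+1})·ξ_Q(q_{k+1})`. Since `ξ_Q(q_k)` is horizontal,
the reflection `P - Q` fixes it, so pairing the discrete nonholonomic equation with `ξ_Q(q_k)` gives
`D₁L_d(q_k, q_{k+1})·ξ_Q(q_k) = -D₂L_d(q_{k-1}, q_k)·ξ_Q(q_k)`. Comparing the two identities yields
the conservation law.
-/

open Manifold

section

variable {E : Type*} [NormedAddCommGroup E] [NormedSpace ℝ E]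
  {H : Type*} [TopologicalSpace H] {I : ModelWithCorners ℝ E H}
  {M : Type*} [TopologicalSpace M] [ChartedSpace H M]
  {E' : Type*} [NormedAddCommGroup E'] [NormedSpace ℝ E']
  {H' : Type*} [TopologicalSpace H'] {J : ModelWithCorners ℝ E' H'}
  {N : Type*} [TopologicalSpace N] [ChartedSpace H' N]

theorem mfderiv_apply_mfderiv_eq_zero_of_comp_const {F : M → ℝ} {γ : ℝ → M} {t : ℝ} {x : M}
    (hF : MDifferentiableAt I 𝓘(ℝ, ℝ) F x) (hγ : MDifferentiableAt 𝓘(ℝ, ℝ) I γ t)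
    (hγt : γ t = x) (hconst : ∀ s, F (γ s) = F x) :
    mfderiv I 𝓘(ℝ, ℝ) F x (mfderiv 𝓘(ℝ, ℝ) I γ t 1) = 0 := by
  have hcomp : F ∘ γ = fun _ => F x := funext hconst
  rw [← mfderiv_comp_apply_of_eq t hF hγ hγt, hcomp, mfderiv_const]
  rfl

variable (I) in
noncomputable def infinitesimalGenerator {G : Type*} [SMul G M] (c : ℝ → G) (x : M) :
    TangentSpace I x :=
  mfderiv 𝓘(ℝ, ℝ) I (fun s => c s • x) 0 1

theorem mfderiv_fst_add_mfderiv_snd_eq_zero_of_smul_invariant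
    {G : Type*} [Monoid G] [MulAction G M] [MulAction G N]
    {L : M → N → ℝ} (hinv : ∀ (g : G) (x : M) (y : N), L (g • x) (g • y) = L x y)
    {c : ℝ → G} (hc0 : c 0 = 1) {x : M} {y : N}
    (hL : MDifferentiableAt (I.prod J) 𝓘(ℝ, ℝ) (fun p : M × N => L p.1 p.2) (x, y))
    (hx : MDifferentiableAt 𝓘(ℝ, ℝ) I (fun s => c s • x) 0)
    (hy : MDifferentiableAt 𝓘(ℝ, ℝ) J (fun s => c s • y) 0) :
    (mfderiv I 𝓘(ℝ, ℝ) (fun x' => L x' y) x (infinitesimalGenerator I c x) : ℝ)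
      + mfderiv J 𝓘(ℝ, ℝ) (fun y' => L x y') y (infinitesimalGenerator J c y) = 0 := by
  have horbit : mfderiv 𝓘(ℝ, ℝ) (I.prod J) (fun s => (c s • x, c s • y)) 0 1
      = ((infinitesimalGenerator I c x, infinitesimalGenerator J c y) : E × E') := by
    rw [hx.mfderiv_prod hy]; rfl
  calc _ = mfderiv (I.prod J) 𝓘(ℝ, ℝ) (fun p : M × N => L p.1 p.2) (x, y)
          ((infinitesimalGenerator I c x, infinitesimalGenerator J c y) : E × E') :=
        (mfderiv_prod_eq_add_apply hL).symm
    _ = mfderiv (I.prod J) 𝓘(ℝ, ℝ) (fun p : M × N => L p.1 p.2) (x, y)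
          (mfderiv 𝓘(ℝ, ℝ) (I.prod J) (fun s => (c s • x, c s • y)) 0 1) := by
        rw [horbit]
    _ = 0 := mfderiv_apply_mfderiv_eq_zero_of_comp_const hL (hx.prodMk hy) (by simp [hc0])
        fun s => hinv (c s) x y

end

theorem horizontal_symmetry_momentum_conservation_general
    {E : Type*} [NormedAddCommGroup E] [NormedSpace ℝ E]
    {H : Type*} [TopologicalSpace H] (I : ModelWithCorners ℝ E H)
    {Q : Type*} [TopologicalSpace Q] [ChartedSpace H Q]
    {G : Type*} [Group G] [MulAction G Q]
    (Ld : Q → Q → ℝ)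
    (hLd : ContMDiff (I.prod I) 𝓘(ℝ, ℝ) (⊤ : ℕ∞) (fun p : Q × Q => Ld p.1 p.2))
    (hinv : ∀ (g : G) (q₀ q₁ : Q), Ld (g • q₀) (g • q₁) = Ld q₀ q₁)
    (c : ℝ → G) (hc0 : c 0 = 1)
    (hcact : ContMDiff (𝓘(ℝ, ℝ).prod I) I (⊤ : ℕ∞) (fun p : ℝ × Q => c p.1 • p.2))
    (ξQ : (q : Q) → TangentSpace I q)
    (hξQ : ∀ q : Q, ξQ q = mfderiv 𝓘(ℝ, ℝ) I (fun s : ℝ => c s • q) 0 (1 : ℝ))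
    -- the constraint distribution and the orthogonal projectors at each point
    (D : (q : Q) → Submodule ℝ (TangentSpace I q))
    (P Qproj : (q : Q) → TangentSpace I q →ₗ[ℝ] TangentSpace I q)
    (hPD : ∀ (q : Q) (v : TangentSpace I q), v ∈ D q → P q v = v)
    (hQD : ∀ (q : Q) (v : TangentSpace I q), v ∈ D q → Qproj q v = 0)
    -- ξ is a horizontal symmetry
    (hhoriz : ∀ q : Q, ξQ q ∈ D q)
    -- the discrete trajectory and the discrete nonholonomic equations
    (qs : ℕ → Q)
    (heqns : ∀ (k : ℕ) (v : TangentSpace I (qs (k+1))),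
      (show ℝ from mfderiv I 𝓘(ℝ, ℝ) (fun q => Ld q (qs (k+2))) (qs (k+1))
          (P (qs (k+1)) v - Qproj (qs (k+1)) v))
        + (show ℝ from mfderiv I 𝓘(ℝ, ℝ) (fun q => Ld (qs k) q) (qs (k+1)) v) = 0) :
    ∀ k : ℕ,
      (show ℝ from mfderiv I 𝓘(ℝ, ℝ) (fun q => Ld (qs (k+1)) q) (qs (k+2)) (ξQ (qs (k+2))))
        = (show ℝ from mfderiv I 𝓘(ℝ, ℝ) (fun q => Ld (qs k) q) (qs (k+1)) (ξQ (qs (k+1)))) := by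
  have horbit (q : Q) : MDifferentiableAt 𝓘(ℝ, ℝ) I (fun s => c s • q) 0 :=
    ((hcact.comp (contMDiff_id.prodMk contMDiff_const)) 0).mdifferentiableAt (by simp)
  intro k
  have hinvariance := mfderiv_fst_add_mfderiv_snd_eq_zero_of_smul_invariant hinv hc0
    ((hLd _).mdifferentiableAt (by simp)) (horbit (qs (k+1))) (horbit (qs (k+2)))
  rw [← show ξQ = infinitesimalGenerator I c from funext hξQ] at hinvariance
  have heqn := heqns k (ξQ (qs (k+1)))
  rw [hPD _ _ (hhoriz _), hQD _ _ (hhoriz _), sub_zero] at heqn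
  exact (eq_neg_of_add_eq_zero_right hinvariance).trans (eq_neg_of_add_eq_zero_right heqn).symm

/-- Conservation of the nonholonomic momentum component of a
horizontal symmetry.  `G` acts on the manifold `Q`, `L_d : Q × Q → ℝ` is smooth
and `G`-invariant, `D` is a distribution with projectors `P` onto `D` and
`Qproj` onto `D^⊥` on each tangent space, and `ξ` is a horizontal symmetry:
its infinitesimal generator `ξ_Q(q) = d/ds|₀ (c(s)·q)` (for the one-parameter
family `c` with `c 0 = 1`) lies in `D_q` for all `q`.  If the sequence `(q_k)`
satisfies the discrete nonholonomic equations
`(P - Q)*(D₁L_d(q_k, q_{k+1})) + D₂L_d(q_{k-1}, q_k) = 0`, then the momentum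
component `J_ξ(q_{k-1}, q_k) = ⟨D₂L_d(q_{k-1}, q_k), ξ_Q(q_k)⟩` is constant. -/
theorem horizontal_symmetry_momentum_conservation
    {E : Type*} [NormedAddCommGroup E] [NormedSpace ℝ E]
    {H : Type*} [TopologicalSpace H] (I : ModelWithCorners ℝ E H)
    {Q : Type*} [TopologicalSpace Q] [ChartedSpace H Q] [IsManifold I (⊤ : ℕ∞) Q]
    {G : Type*} [Group G] [MulAction G Q]
    (Ld : Q → Q → ℝ)
    (hLd : ContMDiff (I.prod I) 𝓘(ℝ, ℝ) (⊤ : ℕ∞) (fun p : Q × Q => Ld p.1 p.2))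
    (hinv : ∀ (g : G) (q₀ q₁ : Q), Ld (g • q₀) (g • q₁) = Ld q₀ q₁)
    (c : ℝ → G) (hc0 : c 0 = 1)
    (hcact : ContMDiff (𝓘(ℝ, ℝ).prod I) I (⊤ : ℕ∞) (fun p : ℝ × Q => c p.1 • p.2))
    (ξQ : (q : Q) → TangentSpace I q)
    (hξQ : ∀ q : Q, ξQ q = mfderiv 𝓘(ℝ, ℝ) I (fun s : ℝ => c s • q) 0 (1 : ℝ))
    -- the constraint distribution and the orthogonal projectors at each point
    (D : (q : Q) → Submodule ℝ (TangentSpace I q))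
    (P Qproj : (q : Q) → TangentSpace I q →ₗ[ℝ] TangentSpace I q)
    (hPD : ∀ (q : Q) (v : TangentSpace I q), v ∈ D q → P q v = v)
    (hQD : ∀ (q : Q) (v : TangentSpace I q), v ∈ D q → Qproj q v = 0)
    -- ξ is a horizontal symmetry
    (hhoriz : ∀ q : Q, ξQ q ∈ D q)
    -- the discrete trajectory and the discrete nonholonomic equations
    (qs : ℕ → Q)
    (heqns : ∀ (k : ℕ) (v : TangentSpace I (qs (k+1))),
      (show ℝ from mfderiv I 𝓘(ℝ, ℝ) (fun q => Ld q (qs (k+2))) (qs (k+1))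
          (P (qs (k+1)) v - Qproj (qs (k+1)) v))
        + (show ℝ from mfderiv I 𝓘(ℝ, ℝ) (fun q => Ld (qs k) q) (qs (k+1)) v) = 0) :
    ∀ k : ℕ,
      (show ℝ from mfderiv I 𝓘(ℝ, ℝ) (fun q => Ld (qs (k+1)) q) (qs (k+2)) (ξQ (qs (k+2))))
        = (show ℝ from mfderiv I 𝓘(ℝ, ℝ) (fun q => Ld (qs k) q) (qs (k+1)) (ξQ (qs (k+1)))) :=
  horizontal_symmetry_momentum_conservation_general I Ld hLd hinv c hc0 hcact ξQ hξQ D P Qproj hPD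
    hQD hhoriz qs heqns
end
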